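/- arXiv:math/0508372 — 4 statements merged into one kernel-verified Lean document; each statement's English description precedes it below -/
import Mathlib

section
/- Fix p : ℤ and assume the Laplacian Δ is surjective in degrees p−1 and p−2 (i.e. Δ (p−1) and Δ (p−2) are surjective). Suppose W is a subspace of V p with W ⊆ ker (d p) ∩ ker (δ p) and with ker (d p) = W ⊕ range (d (p−1)) as an internal direct sum. Then the p-th cohomology of the subcomplex of harmonic elements with differential d, namely the quotient (ker (d p) ∩ ker (Δ p)) / (image under d (p−1) of ker (Δ (p−1))), is linearly isomorphic to the product W × (ker (d (p−1)) / range (d (p−2))). (This is the abstract form of Theorem 1: the harmonic cohomology in degree p is the de Rham cohomology in degree p plus an echo of the de Rham cohomology in degree p−1.) -/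
/-!
For closed `x` one has `Δ x = d δ x`, so a closed harmonic `x` yields the closed form `δ x`;
sending `x` to its `W`-component and the class of `δ x` gives a map to
`W × H^{p-1}`. The identities `δ d = Δ - d δ` and `Δ d = d Δ` do the rest: a pair `(w, [z])`
is hit by `w + d y` with `Δ y = z`, and if `x = d y` has `δ x = d u` exact, then
`Δ y = d (δ y + u)`, so solving `Δ v = δ y + u` one degree lower makes `y - d v` harmonic with
`d (y - d v) = x`. Hence the kernel is exactly `d (ker Δ)`.
-/

/-- Transport along an equality of indices, as a linear map (the identity map). -/
def lcast (V : ℤ → Type*) [∀ p, AddCommGroup (V p)] [∀ p, Module ℝ (V p)]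
    {p q : ℤ} (h : p = q) : V p →ₗ[ℝ] V q := by
  subst h; exact LinearMap.id

/-- The differential `d (p-1)`, regarded as a linear map into `V p`. -/
def dTo (V : ℤ → Type*) [∀ p, AddCommGroup (V p)] [∀ p, Module ℝ (V p)]
    (d : ∀ p : ℤ, V p →ₗ[ℝ] V (p + 1)) (p : ℤ) : V (p - 1) →ₗ[ℝ] V p :=
  (lcast V (by omega)).comp (d (p - 1))

/-- The codifferential `δ (p+1)`, regarded as a linear map into `V p`. -/
def deltaTo (V : ℤ → Type*) [∀ p, AddCommGroup (V p)] [∀ p, Module ℝ (V p)]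
    (δ : ∀ p : ℤ, V p →ₗ[ℝ] V (p - 1)) (p : ℤ) : V (p + 1) →ₗ[ℝ] V p :=
  (lcast V (by omega)).comp (δ (p + 1))

/-- The Laplacian `Δ p = d (p-1) ∘ δ p + δ (p+1) ∘ d p : V p →ₗ[ℝ] V p`. -/
def Lap (V : ℤ → Type*) [∀ p, AddCommGroup (V p)] [∀ p, Module ℝ (V p)]
    (d : ∀ p : ℤ, V p →ₗ[ℝ] V (p + 1)) (δ : ∀ p : ℤ, V p →ₗ[ℝ] V (p - 1))
    (p : ℤ) : V p →ₗ[ℝ] V p :=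
  ((dTo V d p).comp (δ p)) + ((deltaTo V δ p).comp (d p))

namespace Submodule

variable {R M : Type*} [Ring R] [AddCommGroup M] [Module R M] {W U K : Submodule R M}

lemma isCompl_comap_subtype_of_sup_eq (hdisj : Disjoint W U) (hspan : W ⊔ U = K) :
    IsCompl (W.comap K.subtype) (U.comap K.subtype) := by
  constructor
  · rw [disjoint_iff, ← comap_inf, disjoint_iff.mp hdisj, comap_bot, ker_subtype]
  · rw [codisjoint_iff, eq_top_iff]
    rintro ⟨x, hx⟩ -
    obtain ⟨w, hw, u, hu, rfl⟩ := mem_sup.mp (hspan ▸ hx)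
    have hwK : w ∈ K := hspan ▸ mem_sup_left hw
    have huK : u ∈ K := hspan ▸ mem_sup_right hu
    exact mem_sup.mpr ⟨⟨w, hwK⟩, hw, ⟨u, huK⟩, hu, rfl⟩

noncomputable def projOntoAlong (hdisj : Disjoint W U) (hspan : W ⊔ U = K) : K →ₗ[R] W :=
  (comapSubtypeEquivOfLe (hspan ▸ le_sup_left : W ≤ K)).toLinearMap ∘ₗ
    (W.comap K.subtype).projectionOnto _ (isCompl_comap_subtype_of_sup_eq hdisj hspan)

lemma projOntoAlong_eq_zero_iff (hdisj : Disjoint W U) (hspan : W ⊔ U = K) (x : K) :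
    projOntoAlong hdisj hspan x = 0 ↔ (x : M) ∈ U := by
  simp only [projOntoAlong, LinearMap.comp_apply, LinearEquiv.coe_coe,
    LinearEquiv.map_eq_zero_iff, projectionOnto_apply_eq_zero_iff, mem_comap, subtype_apply]

lemma projOntoAlong_add (hdisj : Disjoint W U) (hspan : W ⊔ U = K) {w u : M} (hw : w ∈ W)
    (hu : u ∈ U) (hwu : w + u ∈ K) : projOntoAlong hdisj hspan ⟨w + u, hwu⟩ = ⟨w, hw⟩ := by
  have hwK : w ∈ K := hspan ▸ mem_sup_left hw
  have huK : u ∈ K := hspan ▸ mem_sup_right hu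
  have hsplit : (⟨w + u, hwu⟩ : K) = ⟨w, hwK⟩ + ⟨u, huK⟩ := rfl
  rw [hsplit, map_add, (projOntoAlong_eq_zero_iff hdisj hspan ⟨u, huK⟩).mpr hu, add_zero]
  simp only [projOntoAlong, LinearMap.comp_apply, LinearEquiv.coe_coe]
  rw [projectionOnto_apply_of_mem_left _ (show (⟨w, hwK⟩ : K) ∈ W.comap K.subtype from hw)]
  rfl

end Submodule

section Laplacian

variable {V : ℤ → Type*} [∀ p, AddCommGroup (V p)] [∀ p, Module ℝ (V p)]
  {d : ∀ p : ℤ, V p →ₗ[ℝ] V (p + 1)} {δ : ∀ p : ℤ, V p →ₗ[ℝ] V (p - 1)}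

lemma lcast_eq_zero_iff {p q : ℤ} (h : p = q) (x : V p) : lcast V h x = 0 ↔ x = 0 := by
  subst h; exact Iff.rfl

lemma map_lcast {c : ℤ} (f : ∀ p : ℤ, V p →ₗ[ℝ] V (p + c)) {p q : ℤ} (h : p = q) (x : V p) :
    f q (lcast V h x) = lcast V (by rw [h]) (f p x) := by
  subst h; rfl

lemma Lap_apply (p : ℤ) (x : V p) : Lap V d δ p x = dTo V d p (δ p x) + deltaTo V δ p (d p x) :=
  rfl

lemma δ_dTo (p : ℤ) (y : V (p - 1)) :
    δ p (dTo V d p y) = Lap V d δ (p - 1) y - dTo V d (p - 1) (δ (p - 1) y) := by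
  rw [Lap_apply, add_sub_cancel_left, dTo, LinearMap.comp_apply, map_lcast (c := -1)]
  rfl

lemma d_dTo (hd : ∀ p : ℤ, (d (p + 1)).comp (d p) = 0) (p : ℤ) (y : V (p - 1)) :
    d p (dTo V d p y) = 0 := by
  rw [dTo, LinearMap.comp_apply, map_lcast d, ← LinearMap.comp_apply (d (p - 1 + 1)), hd,
    LinearMap.zero_apply, map_zero]

lemma dTo_dTo (hd : ∀ p : ℤ, (d (p + 1)).comp (d p) = 0) (p : ℤ) (y : V (p - 1 - 1)) :
    dTo V d p (dTo V d (p - 1) y) = 0 := by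
  rw [dTo, LinearMap.comp_apply, d_dTo hd, map_zero]

lemma Lap_dTo (hd : ∀ p : ℤ, (d (p + 1)).comp (d p) = 0) (p : ℤ) (y : V (p - 1)) :
    Lap V d δ p (dTo V d p y) = dTo V d p (Lap V d δ (p - 1) y) := by
  rw [Lap_apply, d_dTo hd, map_zero, add_zero, δ_dTo, map_sub, dTo_dTo hd, sub_zero]

end Laplacian

section HarmonicCohomology

open LinearMap Submodule

variable (V : ℤ → Type*) [∀ p, AddCommGroup (V p)] [∀ p, Module ℝ (V p)]
  (d : ∀ p : ℤ, V p →ₗ[ℝ] V (p + 1)) (δ : ∀ p : ℤ, V p →ₗ[ℝ] V (p - 1))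

abbrev closedHarmonic (p : ℤ) : Submodule ℝ (V p) := ker (d p) ⊓ ker (Lap V d δ p)

abbrev harmonicBoundaries (p : ℤ) : Submodule ℝ (closedHarmonic V d δ p) :=
  (map (dTo V d p) (ker (Lap V d δ (p - 1)))).comap (closedHarmonic V d δ p).subtype

abbrev boundaries (p : ℤ) : Submodule ℝ (ker (d p)) :=
  (range (dTo V d p)).comap (ker (d p)).subtype

variable {V d δ}

lemma mem_closedHarmonic_iff {p : ℤ} (x : V p) :
    x ∈ closedHarmonic V d δ p ↔ d p x = 0 ∧ d (p - 1) (δ p x) = 0 := by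
  rw [mem_inf, mem_ker, mem_ker, Lap_apply]
  refine and_congr_right fun hdx => ?_
  rw [hdx, map_zero, add_zero, dTo, comp_apply, lcast_eq_zero_iff]

variable {p : ℤ} {W : Submodule ℝ (V p)} (hdisj : Disjoint W (range (dTo V d p)))
  (hspan : W ⊔ range (dTo V d p) = ker (d p))

variable (δ) in
noncomputable def closedHarmonicToProd :
    closedHarmonic V d δ p →ₗ[ℝ] W × (ker (d (p - 1)) ⧸ boundaries V d (p - 1)) :=
  (projOntoAlong hdisj hspan ∘ₗ inclusion inf_le_left).prod
    ((boundaries V d (p - 1)).mkQ ∘ₗ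
      ((δ p) ∘ₗ (closedHarmonic V d δ p).subtype).codRestrict _
        fun x => ((mem_closedHarmonic_iff (x : V p)).mp x.2).2)

lemma closedHarmonicToProd_fst_eq_zero_iff (x : closedHarmonic V d δ p) :
    (closedHarmonicToProd δ hdisj hspan x).1 = 0 ↔ (x : V p) ∈ range (dTo V d p) :=
  projOntoAlong_eq_zero_iff hdisj hspan _

lemma closedHarmonicToProd_snd_eq_zero_iff (x : closedHarmonic V d δ p) :
    (closedHarmonicToProd δ hdisj hspan x).2 = 0 ↔ δ p x ∈ range (dTo V d (p - 1)) :=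
  Quotient.mk_eq_zero _

lemma closedHarmonicToProd_surjective (hd : ∀ p : ℤ, (d (p + 1)).comp (d p) = 0)
    (hWδ : W ≤ ker (δ p)) (hΔ : Function.Surjective (Lap V d δ (p - 1))) :
    Function.Surjective (closedHarmonicToProd δ hdisj hspan) := by
  rintro ⟨w, c⟩
  obtain ⟨z, rfl⟩ := mkQ_surjective _ c
  obtain ⟨y, hy⟩ := hΔ z
  have hdw : d p w = 0 := (hspan ▸ le_sup_left : W ≤ ker (d p)) w.2
  have hδx : δ p (w + dTo V d p y) = z - dTo V d (p - 1) (δ (p - 1) y) := by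
    rw [map_add, hWδ w.2, zero_add, δ_dTo, hy]
  have hx : (w : V p) + dTo V d p y ∈ closedHarmonic V d δ p := by
    refine (mem_closedHarmonic_iff _).mpr ⟨?_, ?_⟩
    · rw [map_add, hdw, d_dTo hd, add_zero]
    · rw [hδx, map_sub, mem_ker.mp z.2, d_dTo hd, sub_zero]
  refine ⟨⟨_, hx⟩, Prod.ext (projOntoAlong_add hdisj hspan w.2 ⟨y, rfl⟩ _) ?_⟩
  refine (Submodule.Quotient.eq _).mpr ?_
  show δ p (w + dTo V d p y) - z ∈ range (dTo V d (p - 1))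
  rw [hδx, sub_sub_cancel_left]
  exact neg_mem ⟨_, rfl⟩

lemma ker_closedHarmonicToProd (hd : ∀ p : ℤ, (d (p + 1)).comp (d p) = 0)
    (hΔ : Function.Surjective (Lap V d δ (p - 1 - 1))) :
    ker (closedHarmonicToProd δ hdisj hspan) = harmonicBoundaries V d δ p := by
  ext x
  rw [mem_ker, Prod.ext_iff, Prod.fst_zero, Prod.snd_zero,
    closedHarmonicToProd_fst_eq_zero_iff, closedHarmonicToProd_snd_eq_zero_iff]
  show _ ↔ (x : V p) ∈ map (dTo V d p) (ker (Lap V d δ (p - 1)))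
  constructor
  · rintro ⟨⟨y, hy⟩, u, hu⟩
    have hΔy : Lap V d δ (p - 1) y = dTo V d (p - 1) (δ (p - 1) y + u) := by
      rw [map_add, hu, ← hy, δ_dTo, add_sub_cancel]
    obtain ⟨v, hv⟩ := hΔ (δ (p - 1) y + u)
    refine ⟨y - dTo V d (p - 1) v, ?_, ?_⟩
    · rw [SetLike.mem_coe, mem_ker, map_sub, Lap_dTo hd, hv, hΔy, sub_self]
    · rw [map_sub, dTo_dTo hd, sub_zero, hy]
  · rintro ⟨y, hy, hyx⟩
    refine ⟨⟨y, hyx⟩, -δ (p - 1) y, ?_⟩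
    rw [← hyx, map_neg, δ_dTo, mem_ker.mp hy, zero_sub]

end HarmonicCohomology

theorem harmonic_cohomology_iso_general
    (V : ℤ → Type*) [∀ p, AddCommGroup (V p)] [∀ p, Module ℝ (V p)]
    (d : ∀ p : ℤ, V p →ₗ[ℝ] V (p + 1)) (δ : ∀ p : ℤ, V p →ₗ[ℝ] V (p - 1))
    (hd : ∀ p : ℤ, (d (p + 1)).comp (d p) = 0)
    (p : ℤ)
    (hΔ1 : Function.Surjective (Lap V d δ (p - 1)))
    (hΔ2 : Function.Surjective (Lap V d δ (p - 2)))
    (W : Submodule ℝ (V p))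
    (hW : W ≤ LinearMap.ker (d p) ⊓ LinearMap.ker (δ p))
    (hWdisj : W ⊓ LinearMap.range (dTo V d p) = ⊥)
    (hWspan : W ⊔ LinearMap.range (dTo V d p) = LinearMap.ker (d p)) :
    Nonempty (
      ((↥(LinearMap.ker (d p) ⊓ LinearMap.ker (Lap V d δ p)) ⧸
          (Submodule.comap
            (LinearMap.ker (d p) ⊓ LinearMap.ker (Lap V d δ p)).subtype
            (Submodule.map (dTo V d p) (LinearMap.ker (Lap V d δ (p - 1))))))
        ≃ₗ[ℝ]
      (W × (↥(LinearMap.ker (d (p - 1))) ⧸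
          (Submodule.comap (LinearMap.ker (d (p - 1))).subtype
            (LinearMap.range (dTo V d (p - 1)))))))) := by
  have hdisj : Disjoint W (LinearMap.range (dTo V d p)) := disjoint_iff.mpr hWdisj
  have hΔ2' : Function.Surjective (Lap V d δ (p - 1 - 1)) := by
    rwa [show p - 1 - 1 = p - 2 by omega]
  exact ⟨(Submodule.quotEquivOfEq _ _ (ker_closedHarmonicToProd hdisj hWspan hd hΔ2').symm).trans
    (LinearMap.quotKerEquivOfSurjective _
      (closedHarmonicToProd_surjective hdisj hWspan hd (hW.trans inf_le_right) hΔ1))⟩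

/-- **Theorem 1 (abstract form).**  If the Laplacian is surjective in degrees `p-1` and
`p-2`, and `W ⊆ ker (d p) ∩ ker (δ p)` is a subspace with `ker (d p) = W ⊕ range (d (p-1))`,
then the `p`-th cohomology of the complex of harmonic elements with differential `d`,
`(ker (d p) ∩ ker (Δ p)) / d (p-1) (ker (Δ (p-1)))`, is linearly isomorphic to
`W × (ker (d (p-1)) / range (d (p-2)))`. -/
theorem harmonic_cohomology_iso
    (V : ℤ → Type*) [∀ p, AddCommGroup (V p)] [∀ p, Module ℝ (V p)]
    (d : ∀ p : ℤ, V p →ₗ[ℝ] V (p + 1)) (δ : ∀ p : ℤ, V p →ₗ[ℝ] V (p - 1))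
    (hd : ∀ p : ℤ, (d (p + 1)).comp (d p) = 0)
    (hδ : ∀ p : ℤ, (δ (p - 1)).comp (δ p) = 0)
    (p : ℤ)
    (hΔ1 : Function.Surjective (Lap V d δ (p - 1)))
    (hΔ2 : Function.Surjective (Lap V d δ (p - 2)))
    (W : Submodule ℝ (V p))
    (hW : W ≤ LinearMap.ker (d p) ⊓ LinearMap.ker (δ p))
    (hWdisj : W ⊓ LinearMap.range (dTo V d p) = ⊥)
    (hWspan : W ⊔ LinearMap.range (dTo V d p) = LinearMap.ker (d p)) :
    Nonempty (
      ((↥(LinearMap.ker (d p) ⊓ LinearMap.ker (Lap V d δ p)) ⧸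
          (Submodule.comap
            (LinearMap.ker (d p) ⊓ LinearMap.ker (Lap V d δ p)).subtype
            (Submodule.map (dTo V d p) (LinearMap.ker (Lap V d δ (p - 1))))))
        ≃ₗ[ℝ]
      (W × (↥(LinearMap.ker (d (p - 1))) ⧸
          (Submodule.comap (LinearMap.ker (d (p - 1))).subtype
            (LinearMap.range (dTo V d (p - 1)))))))) :=
  harmonic_cohomology_iso_general V d δ hd p hΔ1 hΔ2 W hW hWdisj hWspan
end

section
/- Fix p : ℤ and assume the Laplacian Δ is surjective in degrees p−1 and p−2. Then the codifferential δ p induces a well-defined linear isomorphism from the quotient (range (d (p−1)) ∩ ker (Δ p)) / (image under d (p−1) of ker (Δ (p−1))) [exact harmonic p-elements modulo differentials of harmonic (p−1)-elements] onto the quotient ker (d (p−1)) / range (d (p−2)) [the (p−1)-st cohomology], sending the class of φ to the class of δ p φ. (This is the abstract form of Lemma 3.) -/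
section aux
variable {V : ℤ → Type*} [∀ p, AddCommGroup (V p)] [∀ p, Module ℝ (V p)]
variable (d : ∀ p : ℤ, V p →ₗ[ℝ] V (p + 1)) (δ : ∀ p : ℤ, V p →ₗ[ℝ] V (p - 1))

lemma lcast_eq_zero {a b : ℤ} (h : a = b) (x : V a) :
    lcast V h x = 0 ↔ x = 0 := by subst h; simp [lcast]

lemma d_lcast {a b : ℤ} (h : a = b) (x : V a) :
    d b (lcast V h x) = lcast V (by omega) (d a x) := by subst h; simp [lcast]

lemma δ_lcast {a b : ℤ} (h : a = b) (x : V a) :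
    δ b (lcast V h x) = lcast V (by omega) (δ a x) := by subst h; simp [lcast]

lemma lap_apply (q : ℤ) (x : V q) :
    Lap V d δ q x = dTo V d q (δ q x) + deltaTo V δ q (d q x) := rfl

lemma dTo_eq_zero (q : ℤ) (x : V (q - 1)) :
    dTo V d q x = 0 ↔ d (q - 1) x = 0 := by
  simp only [dTo, LinearMap.comp_apply, lcast_eq_zero]

variable (hd : ∀ p : ℤ, (d (p + 1)).comp (d p) = 0)

include hd in
lemma d_dTo_s2 (q : ℤ) (x : V (q - 1)) : d q (dTo V d q x) = 0 := by
  simp only [dTo, LinearMap.comp_apply]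
  rw [d_lcast]
  have h0 : d (q - 1 + 1) (d (q - 1) x) = 0 := by
    have := congrArg (fun f => f x) (hd (q - 1)); simpa using this
  rw [h0]; simp

include hd in
lemma dTo_dTo_s2 (q : ℤ) (x : V (q - 1 - 1)) : dTo V d q (dTo V d (q - 1) x) = 0 := by
  rw [dTo_eq_zero]
  exact d_dTo_s2 d hd (q - 1) x

lemma delta_dTo (q : ℤ) (x : V (q - 1)) :
    δ q (dTo V d q x) = deltaTo V δ (q - 1) (d (q - 1) x) := by
  simp only [dTo, deltaTo, LinearMap.comp_apply]
  rw [δ_lcast]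

lemma lap_surj_of_eq {a b : ℤ} (h : a = b)
    (hs : Function.Surjective (Lap V d δ a)) :
    Function.Surjective (Lap V d δ b) := by subst h; exact hs

include hd in
lemma mem_ker_d_of_mem (q : ℤ) (x : V q)
    (hx : x ∈ LinearMap.range (dTo V d q) ⊓ LinearMap.ker (Lap V d δ q)) :
    d (q - 1) (δ q x) = 0 := by
  obtain ⟨hr, hk⟩ := Submodule.mem_inf.mp hx
  obtain ⟨y, hy⟩ := hr
  have hdx : d q x = 0 := by rw [← hy]; exact d_dTo_s2 d hd q y
  have hk' : Lap V d δ q x = 0 := hk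
  rw [lap_apply, hdx, map_zero, add_zero] at hk'
  rw [← dTo_eq_zero]
  exact hk'

lemma delta_dTo_mem_range (q : ℤ) (ψ : V (q - 1)) (hψ : Lap V d δ (q - 1) ψ = 0) :
    δ q (dTo V d q ψ) ∈ LinearMap.range (dTo V d (q - 1)) := by
  rw [delta_dTo]
  rw [lap_apply] at hψ
  have h1 : deltaTo V δ (q - 1) (d (q - 1) ψ) = - dTo V d (q - 1) (δ (q - 1) ψ) :=
    eq_neg_of_add_eq_zero_right hψ
  rw [h1]
  exact Submodule.neg_mem _ ⟨_, rfl⟩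

include hd in
lemma surj_core (q : ℤ) (hΔ1 : Function.Surjective (Lap V d δ (q - 1)))
    (α : V (q - 1)) (hα : d (q - 1) α = 0) :
    ∃ β : V (q - 1),
      dTo V d q β ∈ LinearMap.range (dTo V d q) ⊓ LinearMap.ker (Lap V d δ q) ∧
      δ q (dTo V d q β) - α ∈ LinearMap.range (dTo V d (q - 1)) := by
  obtain ⟨β, hβ⟩ := hΔ1 α
  rw [lap_apply] at hβ
  have hδdβ : δ q (dTo V d q β) = α - dTo V d (q - 1) (δ (q - 1) β) := by
    rw [delta_dTo]
    exact eq_sub_of_add_eq' hβ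
  refine ⟨β, ?_, ?_⟩
  · rw [Submodule.mem_inf]
    refine ⟨⟨β, rfl⟩, ?_⟩
    show Lap V d δ q (dTo V d q β) = 0
    rw [lap_apply, d_dTo_s2 d hd, map_zero, add_zero, hδdβ, map_sub, dTo_dTo_s2 d hd,
      sub_zero, dTo_eq_zero]
    exact hα
  · rw [hδdβ, sub_sub_cancel_left]
    exact Submodule.neg_mem _ ⟨_, rfl⟩

include hd in
lemma inj_core (q : ℤ) (hΔ2 : Function.Surjective (Lap V d δ (q - 1 - 1))) (x : V q)
    (hx : x ∈ LinearMap.range (dTo V d q) ⊓ LinearMap.ker (Lap V d δ q))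
    (hδx : δ q x ∈ LinearMap.range (dTo V d (q - 1))) :
    x ∈ Submodule.map (dTo V d q) (LinearMap.ker (Lap V d δ (q - 1))) := by
  obtain ⟨hr, hk⟩ := Submodule.mem_inf.mp hx
  obtain ⟨ψ₀, hψ₀⟩ := hr
  obtain ⟨γ, hγ⟩ := hδx
  obtain ⟨w, hw⟩ := hΔ2 (δ (q - 1) ψ₀ + γ)
  refine ⟨ψ₀ - dTo V d (q - 1) w, ?_, ?_⟩
  · show Lap V d δ (q - 1) (ψ₀ - dTo V d (q - 1) w) = 0
    rw [map_sub]
    have h1 : Lap V d δ (q - 1) ψ₀ = dTo V d (q - 1) (δ (q - 1) ψ₀ + γ) := by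
      rw [lap_apply, map_add]
      congr 1
      rw [← delta_dTo, hψ₀, ← hγ]
    have h2 : Lap V d δ (q - 1) (dTo V d (q - 1) w) =
        dTo V d (q - 1) (δ (q - 1) (dTo V d (q - 1) w)) := by
      rw [lap_apply, d_dTo_s2 d hd, map_zero, add_zero]
    rw [h1, h2, ← map_sub, ← hw, delta_dTo, lap_apply, add_sub_cancel_right]
    exact dTo_dTo_s2 d hd (q - 1) _
  · rw [map_sub, hψ₀, dTo_dTo_s2 d hd, sub_zero]

end aux

/-- **Lemma 3 (abstract form).**  If the Laplacian is surjective in degrees `p-1` and `p-2`,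
then the codifferential `δ p` induces a linear isomorphism from
`(range (d (p-1)) ∩ ker (Δ p)) / d (p-1) (ker (Δ (p-1)))` (exact harmonic `p`-elements modulo
differentials of harmonic `(p-1)`-elements) onto `ker (d (p-1)) / range (d (p-2))`
(the `(p-1)`-st cohomology), sending the class of `φ` to the class of `δ p φ`. -/
theorem delta_induces_iso
    (V : ℤ → Type*) [∀ p, AddCommGroup (V p)] [∀ p, Module ℝ (V p)]
    (d : ∀ p : ℤ, V p →ₗ[ℝ] V (p + 1)) (δ : ∀ p : ℤ, V p →ₗ[ℝ] V (p - 1))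
    (hd : ∀ p : ℤ, (d (p + 1)).comp (d p) = 0)
    (hδ : ∀ p : ℤ, (δ (p - 1)).comp (δ p) = 0)
    (p : ℤ)
    (hΔ1 : Function.Surjective (Lap V d δ (p - 1)))
    (hΔ2 : Function.Surjective (Lap V d δ (p - 2))) :
    ∃ e : (↥(LinearMap.range (dTo V d p) ⊓ LinearMap.ker (Lap V d δ p)) ⧸
            (Submodule.comap
              (LinearMap.range (dTo V d p) ⊓ LinearMap.ker (Lap V d δ p)).subtype
              (Submodule.map (dTo V d p) (LinearMap.ker (Lap V d δ (p - 1))))))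
          ≃ₗ[ℝ]
          (↥(LinearMap.ker (d (p - 1))) ⧸
            (Submodule.comap (LinearMap.ker (d (p - 1))).subtype
              (LinearMap.range (dTo V d (p - 1))))),
      ∀ (φ : V p) (hφ : φ ∈ LinearMap.range (dTo V d p) ⊓ LinearMap.ker (Lap V d δ p))
        (hδφ : δ p φ ∈ LinearMap.ker (d (p - 1))),
        e (Submodule.Quotient.mk ⟨φ, hφ⟩) = Submodule.Quotient.mk ⟨δ p φ, hδφ⟩ := by
  classical
  set S : Submodule ℝ (V p) :=
    LinearMap.range (dTo V d p) ⊓ LinearMap.ker (Lap V d δ p) with hSdef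
  set K : Submodule ℝ (V (p - 1)) := LinearMap.ker (d (p - 1)) with hKdef
  set R : Submodule ℝ ↥K :=
    Submodule.comap K.subtype (LinearMap.range (dTo V d (p - 1))) with hRdef
  set N : Submodule ℝ ↥S :=
    Submodule.comap S.subtype
      (Submodule.map (dTo V d p) (LinearMap.ker (Lap V d δ (p - 1)))) with hNdef
  have hΔ2' : Function.Surjective (Lap V d δ (p - 1 - 1)) :=
    lap_surj_of_eq d δ (by omega) hΔ2
  have hmem : ∀ x : ↥S, δ p (x : V p) ∈ K :=
    fun x => mem_ker_d_of_mem d δ hd p x.1 x.2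
  let f : ↥S →ₗ[ℝ] ↥K := LinearMap.codRestrict K ((δ p).comp S.subtype) hmem
  let F : ↥S →ₗ[ℝ] ↥K ⧸ R := R.mkQ.comp f
  have hF_zero : ∀ x : ↥S, F x = 0 ↔ δ p (x : V p) ∈ LinearMap.range (dTo V d (p - 1)) := by
    intro x
    rw [LinearMap.comp_apply, Submodule.mkQ_apply, Submodule.Quotient.mk_eq_zero,
      hRdef, Submodule.mem_comap]
    exact Iff.rfl
  have hNF : N ≤ LinearMap.ker F := by
    intro x hx
    obtain ⟨ψ, hψ, hψx⟩ := hx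
    rw [LinearMap.mem_ker, hF_zero]
    have hx' : (x : V p) = dTo V d p ψ := hψx.symm
    rw [hx']
    exact delta_dTo_mem_range d δ p ψ hψ
  let e₀ := N.liftQ F hNF
  have hker : LinearMap.ker F ≤ N := by
    intro x hx
    have h0 : δ p (x : V p) ∈ LinearMap.range (dTo V d (p - 1)) :=
      (hF_zero x).mp hx
    exact inj_core d δ hd p hΔ2' x.1 x.2 h0
  have hinj : Function.Injective e₀ := by
    rw [← LinearMap.ker_eq_bot]
    exact Submodule.ker_liftQ_eq_bot N F hNF hker
  have hsurj : Function.Surjective e₀ := by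
    intro c
    obtain ⟨a, rfl⟩ := Submodule.Quotient.mk_surjective R c
    obtain ⟨β, hβS, hβdiff⟩ := surj_core d δ hd p hΔ1 a.1 a.2
    refine ⟨Submodule.Quotient.mk ⟨dTo V d p β, hβS⟩, ?_⟩
    rw [Submodule.liftQ_apply]
    show Submodule.Quotient.mk (f ⟨dTo V d p β, hβS⟩) = Submodule.Quotient.mk a
    rw [Submodule.Quotient.eq]
    exact hβdiff
  refine ⟨LinearEquiv.ofBijective e₀ ⟨hinj, hsurj⟩, ?_⟩
  intro φ hφ hδφ
  show e₀ (Submodule.Quotient.mk ⟨φ, hφ⟩) = _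
  rw [Submodule.liftQ_apply]
  rfl
end

section
/- Let 0 < r < R and let U = {(x,y) ∈ ℝ × ℝ : r² < x² + y² < R²} be the open annulus. There do not exist functions a, b : ℝ × ℝ → ℝ, smooth on U, such that a and b are harmonic on U (that is, ∂²a/∂x² + ∂²a/∂y² = 0 and ∂²b/∂x² + ∂²b/∂y² = 0 at every point of U) and ∂b/∂x(x,y) − ∂a/∂y(x,y) = −(1/2)·log(x² + y²) for all (x,y) ∈ U. (That is, the exact harmonic 2-form ω = −(1/2)log(x²+y²) dx∧dy on the annulus is not the exterior derivative of any harmonic 1-form a dx + b dy; in the flat metric on ℝ², a 1-form is harmonic exactly when its coefficient functions are harmonic.) -/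
/-- Partial derivative in the first (x) coordinate direction. -/
noncomputable def pdx (f : ℝ × ℝ → ℝ) (p : ℝ × ℝ) : ℝ :=
  deriv (fun t : ℝ => f (t, p.2)) p.1

/-- Partial derivative in the second (y) coordinate direction. -/
noncomputable def pdy (f : ℝ × ℝ → ℝ) (p : ℝ × ℝ) : ℝ :=
  deriv (fun t : ℝ => f (p.1, t)) p.2

open Real Filter Topology

section Helpers

variable {f g : ℝ × ℝ → ℝ} {p : ℝ × ℝ} {U : Set (ℝ × ℝ)}

private lemma tendsto_sliceX (p : ℝ × ℝ) :
    Tendsto (fun t : ℝ => ((t, p.2) : ℝ × ℝ)) (𝓝 p.1) (𝓝 p) :=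
  (continuous_id.prodMk continuous_const).tendsto p.1

private lemma tendsto_sliceY (p : ℝ × ℝ) :
    Tendsto (fun t : ℝ => ((p.1, t) : ℝ × ℝ)) (𝓝 p.2) (𝓝 p) :=
  (continuous_const.prodMk continuous_id).tendsto p.2

private lemma hasDerivAt_sliceX (hf : DifferentiableAt ℝ f p) :
    HasDerivAt (fun t => f (t, p.2)) (fderiv ℝ f p (1, 0)) p.1 :=
  hf.hasFDerivAt.comp_hasDerivAt p.1 ((hasDerivAt_id p.1).prodMk (hasDerivAt_const p.1 p.2))

private lemma hasDerivAt_sliceY (hf : DifferentiableAt ℝ f p) :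
    HasDerivAt (fun t => f (p.1, t)) (fderiv ℝ f p (0, 1)) p.2 :=
  hf.hasFDerivAt.comp_hasDerivAt p.2 ((hasDerivAt_const p.2 p.1).prodMk (hasDerivAt_id p.2))

private lemma pdx_eq (hf : DifferentiableAt ℝ f p) : pdx f p = fderiv ℝ f p (1, 0) :=
  (hasDerivAt_sliceX hf).deriv

private lemma pdy_eq (hf : DifferentiableAt ℝ f p) : pdy f p = fderiv ℝ f p (0, 1) :=
  (hasDerivAt_sliceY hf).deriv

private lemma pdx_congr (h : f =ᶠ[𝓝 p] g) : pdx f p = pdx g p :=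
  (h.comp_tendsto (tendsto_sliceX p)).deriv_eq

private lemma pdy_congr (h : f =ᶠ[𝓝 p] g) : pdy f p = pdy g p :=
  (h.comp_tendsto (tendsto_sliceY p)).deriv_eq

private lemma diffAt (hU : IsOpen U) (hf : ContDiffOn ℝ (⊤ : ℕ∞) f U) (hp : p ∈ U) :
    DifferentiableAt ℝ f p :=
  (hf.contDiffAt (hU.mem_nhds hp)).differentiableAt (by simp)

private lemma diffAt_fderiv (hU : IsOpen U) (hf : ContDiffOn ℝ (⊤ : ℕ∞) f U) (hp : p ∈ U) :
    DifferentiableAt ℝ (fderiv ℝ f) p :=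
  (((hf.contDiffAt (hU.mem_nhds hp)).fderiv_right (m := 1) (WithTop.coe_le_coe.mpr le_top))).differentiableAt one_ne_zero

private lemma hasFDerivAt_fderiv_apply (hU : IsOpen U) (hf : ContDiffOn ℝ (⊤ : ℕ∞) f U) (hp : p ∈ U)
    (w : ℝ × ℝ) :
    HasFDerivAt (fun q => fderiv ℝ f q w)
      ((ContinuousLinearMap.apply ℝ ℝ w).comp (fderiv ℝ (fderiv ℝ f) p)) p :=
  (ContinuousLinearMap.apply ℝ ℝ w).hasFDerivAt.comp p (diffAt_fderiv hU hf hp).hasFDerivAt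

private lemma pdx_fderiv_apply (hU : IsOpen U) (hf : ContDiffOn ℝ (⊤ : ℕ∞) f U) (hp : p ∈ U)
    (w : ℝ × ℝ) :
    pdx (fun q => fderiv ℝ f q w) p = fderiv ℝ (fderiv ℝ f) p (1, 0) w := by
  rw [pdx_eq (hasFDerivAt_fderiv_apply hU hf hp w).differentiableAt,
    (hasFDerivAt_fderiv_apply hU hf hp w).fderiv]
  rfl

private lemma pdy_fderiv_apply (hU : IsOpen U) (hf : ContDiffOn ℝ (⊤ : ℕ∞) f U) (hp : p ∈ U)
    (w : ℝ × ℝ) :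
    pdy (fun q => fderiv ℝ f q w) p = fderiv ℝ (fderiv ℝ f) p (0, 1) w := by
  rw [pdy_eq (hasFDerivAt_fderiv_apply hU hf hp w).differentiableAt,
    (hasFDerivAt_fderiv_apply hU hf hp w).fderiv]
  rfl

private lemma pdx_ev (hU : IsOpen U) (hf : ContDiffOn ℝ (⊤ : ℕ∞) f U) (hp : p ∈ U) :
    pdx f =ᶠ[𝓝 p] fun q => fderiv ℝ f q (1, 0) :=
  eventually_of_mem (hU.mem_nhds hp) fun q hq => pdx_eq (diffAt hU hf hq)

private lemma pdy_ev (hU : IsOpen U) (hf : ContDiffOn ℝ (⊤ : ℕ∞) f U) (hp : p ∈ U) :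
    pdy f =ᶠ[𝓝 p] fun q => fderiv ℝ f q (0, 1) :=
  eventually_of_mem (hU.mem_nhds hp) fun q hq => pdy_eq (diffAt hU hf hq)

private lemma pdx_pdx (hU : IsOpen U) (hf : ContDiffOn ℝ (⊤ : ℕ∞) f U) (hp : p ∈ U) :
    pdx (pdx f) p = fderiv ℝ (fderiv ℝ f) p (1, 0) (1, 0) := by
  rw [pdx_congr (pdx_ev hU hf hp), pdx_fderiv_apply hU hf hp]

private lemma pdy_pdy (hU : IsOpen U) (hf : ContDiffOn ℝ (⊤ : ℕ∞) f U) (hp : p ∈ U) :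
    pdy (pdy f) p = fderiv ℝ (fderiv ℝ f) p (0, 1) (0, 1) := by
  rw [pdy_congr (pdy_ev hU hf hp), pdy_fderiv_apply hU hf hp]

private lemma symm2 (hU : IsOpen U) (hf : ContDiffOn ℝ (⊤ : ℕ∞) f U) (hp : p ∈ U) (v w : ℝ × ℝ) :
    fderiv ℝ (fderiv ℝ f) p v w = fderiv ℝ (fderiv ℝ f) p w v :=
  (hf.contDiffAt (hU.mem_nhds hp)).isSymmSndFDerivAt (by rw [minSmoothness_of_isRCLikeNormedField]; exact WithTop.coe_le_coe.mpr le_top) v w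

end Helpers

/-- On the open annulus `U = {r² < x² + y² < R²}` (with `0 < r < R`), the exact harmonic
2-form `ω = −(1/2) log(x²+y²) dx∧dy` is not the exterior derivative of any harmonic 1-form
`a dx + b dy`: there are no functions `a, b`, smooth and harmonic on `U`, with
`∂b/∂x − ∂a/∂y = −(1/2) log(x² + y²)` on `U`. -/
theorem omega_not_d_of_harmonic (r R : ℝ) (hr : 0 < r) (hrR : r < R) :
    ¬ ∃ a b : ℝ × ℝ → ℝ,
      ContDiffOn ℝ (⊤ : ℕ∞) a {p : ℝ × ℝ | r ^ 2 < p.1 ^ 2 + p.2 ^ 2 ∧ p.1 ^ 2 + p.2 ^ 2 < R ^ 2} ∧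
      ContDiffOn ℝ (⊤ : ℕ∞) b {p : ℝ × ℝ | r ^ 2 < p.1 ^ 2 + p.2 ^ 2 ∧ p.1 ^ 2 + p.2 ^ 2 < R ^ 2} ∧
      (∀ p : ℝ × ℝ, r ^ 2 < p.1 ^ 2 + p.2 ^ 2 → p.1 ^ 2 + p.2 ^ 2 < R ^ 2 →
        pdx (pdx a) p + pdy (pdy a) p = 0) ∧
      (∀ p : ℝ × ℝ, r ^ 2 < p.1 ^ 2 + p.2 ^ 2 → p.1 ^ 2 + p.2 ^ 2 < R ^ 2 →
        pdx (pdx b) p + pdy (pdy b) p = 0) ∧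
      (∀ p : ℝ × ℝ, r ^ 2 < p.1 ^ 2 + p.2 ^ 2 → p.1 ^ 2 + p.2 ^ 2 < R ^ 2 →
        pdx b p - pdy a p = -(1 / 2) * Real.log (p.1 ^ 2 + p.2 ^ 2)) := by
  rintro ⟨a, b, ha, hb, hHa, hHb, hab⟩
  set U : Set (ℝ × ℝ) :=
    {p : ℝ × ℝ | r ^ 2 < p.1 ^ 2 + p.2 ^ 2 ∧ p.1 ^ 2 + p.2 ^ 2 < R ^ 2} with hUdef
  have hcont : Continuous fun p : ℝ × ℝ => p.1 ^ 2 + p.2 ^ 2 := by fun_prop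
  have hUopen : IsOpen U :=
    (isOpen_lt continuous_const hcont).inter (isOpen_lt hcont continuous_const)
  -- the function v = ∂x a + ∂y b
  set v : ℝ × ℝ → ℝ := fun q => pdx a q + pdy b q with hvdef
  have key : ∀ p : ℝ × ℝ, p ∈ U → ∃ L : (ℝ × ℝ) →L[ℝ] ℝ, HasFDerivAt v L p ∧
      L (1, 0) = -p.2 / (p.1 ^ 2 + p.2 ^ 2) ∧ L (0, 1) = p.1 / (p.1 ^ 2 + p.2 ^ 2) := by
    intro p hp
    have hs : (0:ℝ) < p.1 ^ 2 + p.2 ^ 2 := lt_trans (by positivity) hp.1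
    set Ma := fderiv ℝ (fderiv ℝ a) p with hMa
    set Nb := fderiv ℝ (fderiv ℝ b) p with hNb
    -- explicit derivative of φ q = -(1/2) log (q.1^2+q.2^2)
    have hsq : HasFDerivAt (fun q : ℝ × ℝ => q.1 ^ 2 + q.2 ^ 2)
        (((2:ℕ) * p.1 ^ 1) • ContinuousLinearMap.fst ℝ ℝ ℝ +
          ((2:ℕ) * p.2 ^ 1) • ContinuousLinearMap.snd ℝ ℝ ℝ) p :=
      ((hasDerivAt_pow 2 p.1).comp_hasFDerivAt p hasFDerivAt_fst).add
        ((hasDerivAt_pow 2 p.2).comp_hasFDerivAt p hasFDerivAt_snd)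
    have hφ : HasFDerivAt (fun q : ℝ × ℝ => -(1/2) * Real.log (q.1 ^ 2 + q.2 ^ 2))
        ((-(1/2):ℝ) • ((p.1 ^ 2 + p.2 ^ 2)⁻¹ •
          (((2:ℕ) * p.1 ^ 1) • ContinuousLinearMap.fst ℝ ℝ ℝ +
            ((2:ℕ) * p.2 ^ 1) • ContinuousLinearMap.snd ℝ ℝ ℝ))) p :=
      (hsq.log hs.ne').const_mul _
    -- F = ∂x b - ∂y a as an fderiv expression
    have hFb := hasFDerivAt_fderiv_apply hUopen hb hp ((1:ℝ), (0:ℝ))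
    have hFa := hasFDerivAt_fderiv_apply hUopen ha hp ((0:ℝ), (1:ℝ))
    have hFder : HasFDerivAt (fun q => fderiv ℝ b q (1, 0) - fderiv ℝ a q (0, 1))
        (((ContinuousLinearMap.apply ℝ ℝ ((1:ℝ),(0:ℝ))).comp Nb) -
          ((ContinuousLinearMap.apply ℝ ℝ ((0:ℝ),(1:ℝ))).comp Ma)) p := hFb.sub hFa
    have hFev : (fun q : ℝ × ℝ => -(1/2) * Real.log (q.1 ^ 2 + q.2 ^ 2)) =ᶠ[𝓝 p]
        (fun q => fderiv ℝ b q (1, 0) - fderiv ℝ a q (0, 1)) := by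
      refine eventually_of_mem (hUopen.mem_nhds hp) fun q hq => ?_
      show -(1/2) * Real.log (q.1 ^ 2 + q.2 ^ 2) = fderiv ℝ b q (1, 0) - fderiv ℝ a q (0, 1)
      rw [← pdx_eq (diffAt hUopen hb hq), ← pdy_eq (diffAt hUopen ha hq)]
      exact (hab q hq.1 hq.2).symm
    have huniq := (hFder.congr_of_eventuallyEq hFev).unique hφ
    have A1 : Nb (1,0) (1,0) - Ma (1,0) (0,1) = -(p.1 / (p.1 ^ 2 + p.2 ^ 2)) := by
      have := congrArg (fun L : (ℝ × ℝ) →L[ℝ] ℝ => L ((1:ℝ),(0:ℝ))) huniq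
      simp only [ContinuousLinearMap.sub_apply, ContinuousLinearMap.comp_apply,
        ContinuousLinearMap.smul_apply, ContinuousLinearMap.add_apply,
        ContinuousLinearMap.coe_fst', ContinuousLinearMap.coe_snd',
        ContinuousLinearMap.apply_apply, smul_eq_mul] at this
      rw [this]; field_simp; ring
    have A2 : Nb (0,1) (1,0) - Ma (0,1) (0,1) = -(p.2 / (p.1 ^ 2 + p.2 ^ 2)) := by
      have := congrArg (fun L : (ℝ × ℝ) →L[ℝ] ℝ => L ((0:ℝ),(1:ℝ))) huniq
      simp only [ContinuousLinearMap.sub_apply, ContinuousLinearMap.comp_apply,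
        ContinuousLinearMap.smul_apply, ContinuousLinearMap.add_apply,
        ContinuousLinearMap.coe_fst', ContinuousLinearMap.coe_snd',
        ContinuousLinearMap.apply_apply, smul_eq_mul] at this
      rw [this]; field_simp; ring
    have B1 : Ma (1,0) (1,0) + Ma (0,1) (0,1) = 0 := by
      rw [← pdx_pdx hUopen ha hp, ← pdy_pdy hUopen ha hp]; exact hHa p hp.1 hp.2
    have B2 : Nb (1,0) (1,0) + Nb (0,1) (0,1) = 0 := by
      rw [← pdx_pdx hUopen hb hp, ← pdy_pdy hUopen hb hp]; exact hHb p hp.1 hp.2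
    have C1 : Ma (1,0) (0,1) = Ma (0,1) (1,0) := symm2 hUopen ha hp _ _
    have C2 : Nb (1,0) (0,1) = Nb (0,1) (1,0) := symm2 hUopen hb hp _ _
    -- v near p equals G
    have hG : HasFDerivAt (fun q => fderiv ℝ a q (1, 0) + fderiv ℝ b q (0, 1))
        (((ContinuousLinearMap.apply ℝ ℝ ((1:ℝ),(0:ℝ))).comp Ma) +
          ((ContinuousLinearMap.apply ℝ ℝ ((0:ℝ),(1:ℝ))).comp Nb)) p :=
      (hasFDerivAt_fderiv_apply hUopen ha hp _).add (hasFDerivAt_fderiv_apply hUopen hb hp _)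
    have hvev : v =ᶠ[𝓝 p] (fun q => fderiv ℝ a q (1, 0) + fderiv ℝ b q (0, 1)) := by
      refine eventually_of_mem (hUopen.mem_nhds hp) fun q hq => ?_
      rw [hvdef]
      simp only
      rw [pdx_eq (diffAt hUopen ha hq), pdy_eq (diffAt hUopen hb hq)]
    refine ⟨_, hG.congr_of_eventuallyEq hvev, ?_, ?_⟩
    · simp only [ContinuousLinearMap.add_apply, ContinuousLinearMap.comp_apply,
        ContinuousLinearMap.apply_apply]
      linear_combination A2 + B1 + C2
    · simp only [ContinuousLinearMap.add_apply, ContinuousLinearMap.comp_apply,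
        ContinuousLinearMap.apply_apply]
      linear_combination -A1 + B2 - C1
  -- the circle of radius ρ
  set ρ : ℝ := (r + R) / 2 with hρdef
  have hρ0 : 0 < ρ := by show (0:ℝ) < (r + R) / 2; linarith
  have hrρ : r < ρ := by show r < (r + R) / 2; linarith
  have hρR : ρ < R := by show (r + R) / 2 < R; linarith
  have hcirc : ∀ t : ℝ, (ρ * Real.cos t) ^ 2 + (ρ * Real.sin t) ^ 2 = ρ ^ 2 := by
    intro t
    linear_combination ρ ^ 2 * Real.sin_sq_add_cos_sq t
  have hmem : ∀ t : ℝ, ((ρ * Real.cos t, ρ * Real.sin t) : ℝ × ℝ) ∈ U := by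
    intro t
    constructor
    · simp only
      rw [hcirc t]
      exact pow_lt_pow_left₀ hrρ hr.le two_ne_zero
    · simp only
      rw [hcirc t]
      exact pow_lt_pow_left₀ hρR hρ0.le two_ne_zero
  set g : ℝ → ℝ := fun t => v (ρ * Real.cos t, ρ * Real.sin t) with hgdef
  have hg : ∀ t : ℝ, HasDerivAt g 1 t := by
    intro t
    obtain ⟨L, hL, he1, he2⟩ := key _ (hmem t)
    have hc : HasDerivAt (fun t : ℝ => ((ρ * Real.cos t, ρ * Real.sin t) : ℝ × ℝ))
        (ρ * -Real.sin t, ρ * Real.cos t) t :=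
      ((Real.hasDerivAt_cos t).const_mul ρ).prodMk ((Real.hasDerivAt_sin t).const_mul ρ)
    have hcomp := hL.comp_hasDerivAt t hc
    refine hcomp.congr_deriv ?_; symm
    have hw : ((ρ * -Real.sin t, ρ * Real.cos t) : ℝ × ℝ) =
        (ρ * -Real.sin t) • ((1:ℝ), (0:ℝ)) + (ρ * Real.cos t) • ((0:ℝ), (1:ℝ)) := by
      simp [Prod.ext_iff]
    rw [hw, map_add, map_smul, map_smul, he1, he2]
    simp only [smul_eq_mul]
    rw [hcirc t]
    field_simp
    nlinarith [Real.sin_sq_add_cos_sq t]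
  have hdiff : Differentiable ℝ (fun t => g t - t) :=
    fun t => ((hg t).sub (hasDerivAt_id t)).differentiableAt
  have hconst := is_const_of_deriv_eq_zero hdiff (fun t => by
    have := ((hg t).sub (hasDerivAt_id t)).deriv
    rw [sub_self] at this; exact this)
  have h2π := hconst (2 * Real.pi) 0
  have hper : g (2 * Real.pi) = g 0 := by
    simp [hgdef, Real.cos_two_pi, Real.sin_two_pi]
  rw [hper] at h2π
  have : (2 : ℝ) * Real.pi = 0 := by linarith
  nlinarith [Real.pi_pos]
end

section
/- Let n ≥ 2, let U ⊆ ℝⁿ be open, and let v : ℝⁿ → ℝⁿ be smooth (C^∞) on U. Assume v is curl-free on U (∂vⱼ/∂xᵢ = ∂vᵢ/∂xⱼ on U for all indices i, j, so the 1-form with coefficients vᵢ is closed) and divergence-free on U (Σᵢ ∂vᵢ/∂xᵢ = 0 on U, so the 1-form is co-closed), and that v(x) = 0 for every x ∈ U with last coordinate xₙ = 0. Then v vanishes to infinite order along the hyperplane: for every x ∈ U with xₙ = 0 and every k ∈ ℕ, the k-th iterated Fréchet derivative of v at x is zero. (This is the key step in the proof of Lemma 2: a closed and co-closed form vanishing on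 a hyperplane has all higher partial derivatives, including normal ones, vanishing along it.) -/
open Filter Topology

namespace CC

variable {n : ℕ}

lemma euclid_decomp (u : EuclideanSpace ℝ (Fin n)) :
    ∑ i : Fin n, u i • EuclideanSpace.single i (1:ℝ) = u := by
  refine PiLp.ext fun j => ?_
  rw [show ((∑ i : Fin n, u i • EuclideanSpace.single i (1:ℝ)) j)
      = ∑ i : Fin n, (u i • EuclideanSpace.single i (1:ℝ)) j from
    by rw [WithLp.ofLp_sum]; exact Finset.sum_apply j Finset.univ _]
  simp [EuclideanSpace.single_apply]

lemma clm_eq_zero {F : Type*} [NormedAddCommGroup F] [NormedSpace ℝ F]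
    (L : EuclideanSpace ℝ (Fin n) →L[ℝ] F)
    (h : ∀ i, L (EuclideanSpace.single i 1) = 0) : L = 0 := by
  ext u
  rw [← euclid_decomp u, map_sum]
  simp [h]

lemma tangential {F : Type*} [NormedAddCommGroup F] [NormedSpace ℝ F]
    {U : Set (EuclideanSpace ℝ (Fin n))} (hU : IsOpen U) {N : Fin n}
    {g : EuclideanSpace ℝ (Fin n) → F} {x : EuclideanSpace ℝ (Fin n)}
    (hg : DifferentiableAt ℝ g x) (h0 : ∀ y ∈ U, y N = 0 → g y = 0)
    (hx : x ∈ U) (hx0 : x N = 0) {i : Fin n} (hi : i ≠ N) :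
    fderiv ℝ g x (EuclideanSpace.single i 1) = 0 := by
  set a : EuclideanSpace ℝ (Fin n) := EuclideanSpace.single i 1 with ha
  set c : ℝ → EuclideanSpace ℝ (Fin n) := fun t => x + t • a with hc
  have hca : HasDerivAt c a 0 := by
    have h1 : HasDerivAt (fun t : ℝ => t • a) a 0 := by
      simpa using (hasDerivAt_id (0:ℝ)).smul_const a
    simpa [hc] using h1.const_add x
  have hc0 : c 0 = x := by simp [hc]
  have h1 : HasDerivAt (g ∘ c) (fderiv ℝ g (c 0) a) 0 :=
    (hc0.symm ▸ hg.hasFDerivAt).comp_hasDerivAt 0 hca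
  rw [hc0] at h1
  have h2 : g ∘ c =ᶠ[𝓝 (0:ℝ)] fun _ => 0 := by
    have hcont : Continuous c := by fun_prop
    have hmem : ∀ᶠ t in 𝓝 (0:ℝ), c t ∈ U :=
      hcont.continuousAt.preimage_mem_nhds (hU.mem_nhds (by rwa [hc0]))
    filter_upwards [hmem] with t ht
    refine h0 _ ht ?_
    have hct : c t N = x N + t * a N := rfl
    rw [hct, hx0, ha]
    simp [EuclideanSpace.single_apply, Ne.symm hi]
  have h3 : HasDerivAt (g ∘ c) 0 0 :=
    (hasDerivAt_const (0:ℝ) (0:F)).congr_of_eventuallyEq h2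
  exact h1.unique h3

lemma fderiv_component {v : EuclideanSpace ℝ (Fin n) → EuclideanSpace ℝ (Fin n)}
    {x : EuclideanSpace ℝ (Fin n)} (hd : DifferentiableAt ℝ v x) (i : Fin n)
    (u : EuclideanSpace ℝ (Fin n)) :
    fderiv ℝ (fun y => v y i) x u = (fderiv ℝ v x u) i := by
  have : fderiv ℝ (fun y => v y i) x
      = (EuclideanSpace.proj i).comp (fderiv ℝ v x) :=
    ((EuclideanSpace.proj (𝕜 := ℝ) i).hasFDerivAt.comp x hd.hasFDerivAt).fderiv
  rw [this]; rfl

structure Good (U : Set (EuclideanSpace ℝ (Fin n))) (N : Fin n)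
    (v : EuclideanSpace ℝ (Fin n) → EuclideanSpace ℝ (Fin n)) : Prop where
  smooth : ContDiffOn ℝ (⊤ : ℕ∞) v U
  curl : ∀ x ∈ U, ∀ i j : Fin n,
    fderiv ℝ (fun y => v y j) x (EuclideanSpace.single i 1) =
      fderiv ℝ (fun y => v y i) x (EuclideanSpace.single j 1)
  div : ∀ x ∈ U, ∑ i : Fin n,
    fderiv ℝ (fun y => v y i) x (EuclideanSpace.single i 1) = 0
  zero : ∀ x ∈ U, x N = 0 → v x = 0

variable {U : Set (EuclideanSpace ℝ (Fin n))} {N : Fin n}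
  {v : EuclideanSpace ℝ (Fin n) → EuclideanSpace ℝ (Fin n)}
  {x : EuclideanSpace ℝ (Fin n)}

lemma Good.diffAt (hU : IsOpen U) (g : Good U N v) (hx : x ∈ U) :
    DifferentiableAt ℝ v x :=
  (g.smooth.contDiffAt (hU.mem_nhds hx)).differentiableAt (by simp)

/-- Lemma L: the full first derivative vanishes at hyperplane points. -/
lemma Good.fderiv_zero (hU : IsOpen U) (g : Good U N v) (hx : x ∈ U)
    (hx0 : x N = 0) : fderiv ℝ v x = 0 := by
  have hd := g.diffAt hU hx
  have tang : ∀ i : Fin n, i ≠ N → fderiv ℝ v x (EuclideanSpace.single i 1) = 0 :=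
    fun i hi => tangential hU hd g.zero hx hx0 hi
  refine clm_eq_zero _ fun i => ?_
  rcases eq_or_ne i N with rfl | hi
  · refine PiLp.ext fun l => ?_
    have key : (fderiv ℝ v x (EuclideanSpace.single i 1)) l
        = (fderiv ℝ v x (EuclideanSpace.single l 1)) i := by
      rw [← fderiv_component hd l, ← fderiv_component hd i, g.curl x hx i l]
    rcases eq_or_ne l i with rfl | hl
    · -- diagonal: use divergence
      have hdiv := g.div x hx
      have hsum : ∑ j : Fin n, (fderiv ℝ v x (EuclideanSpace.single j 1)) j = 0 := by
        rw [← hdiv]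
        exact Finset.sum_congr rfl fun j _ => (fderiv_component hd j _).symm
      rw [Finset.sum_eq_single l] at hsum
      · simpa using hsum
      · intro j _ hj
        rw [tang j hj]; rfl
      · simp
    · rw [key, tang l (by simpa using hl)]; rfl
  · rw [tang i hi]

noncomputable def A (u : EuclideanSpace ℝ (Fin n)) :
    (EuclideanSpace ℝ (Fin n) →L[ℝ] EuclideanSpace ℝ (Fin n)) →L[ℝ]
      EuclideanSpace ℝ (Fin n) :=
  ContinuousLinearMap.apply ℝ (EuclideanSpace ℝ (Fin n)) u

/-- The second derivative exists at points of `U`. -/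
lemma Good.hasFDerivAt_fderiv (hU : IsOpen U) (g : Good U N v) (hx : x ∈ U) :
    HasFDerivAt (fderiv ℝ v) (fderiv ℝ (fderiv ℝ v) x) x := by
  have h1 : ContDiffOn ℝ (⊤ : ℕ∞) (fderiv ℝ v) U := g.smooth.fderiv_of_isOpen hU (by simp)
  exact ((h1.contDiffAt (hU.mem_nhds hx)).differentiableAt (by simp)).hasFDerivAt

/-- Schwarz symmetry of the second derivative. -/
lemma Good.symmS (hU : IsOpen U) (g : Good U N v) (hx : x ∈ U)
    (a b : EuclideanSpace ℝ (Fin n)) :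
    fderiv ℝ (fderiv ℝ v) x a b = fderiv ℝ (fderiv ℝ v) x b a := by
  refine second_derivative_symmetric_of_eventually (f := v) (f' := fderiv ℝ v)
    ?_ (g.hasFDerivAt_fderiv hU hx) a b
  filter_upwards [hU.mem_nhds hx] with y hy
  exact (g.diffAt hU hy).hasFDerivAt

/-- Derivative of the component function `y ↦ (fderiv v y (eₚ)) q`. -/
lemma Good.hasFDerivAt_comp2 (hU : IsOpen U) (g : Good U N v) (hx : x ∈ U)
    (p q : Fin n) :
    HasFDerivAt (fun y => (fderiv ℝ v y (EuclideanSpace.single p 1)) q)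
      (((EuclideanSpace.proj q).comp (A (EuclideanSpace.single p 1))).comp
        (fderiv ℝ (fderiv ℝ v) x)) x :=
  ((EuclideanSpace.proj (𝕜 := ℝ) q).comp
    (A (EuclideanSpace.single p 1))).hasFDerivAt.comp x (g.hasFDerivAt_fderiv hU hx)

/-- Differentiated curl identity: `∂ₐ ∂ₚ v_q = ∂ₐ ∂_q v_p`. -/
lemma Good.swapS (hU : IsOpen U) (g : Good U N v) (hx : x ∈ U)
    (a : EuclideanSpace ℝ (Fin n)) (p q : Fin n) :
    (fderiv ℝ (fderiv ℝ v) x a (EuclideanSpace.single p 1)) q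
      = (fderiv ℝ (fderiv ℝ v) x a (EuclideanSpace.single q 1)) p := by
  have h1 := (g.hasFDerivAt_comp2 hU hx p q).fderiv
  have h2 := (g.hasFDerivAt_comp2 hU hx q p).fderiv
  have heq : (fun y => (fderiv ℝ v y (EuclideanSpace.single p 1)) q)
      =ᶠ[𝓝 x] (fun y => (fderiv ℝ v y (EuclideanSpace.single q 1)) p) := by
    filter_upwards [hU.mem_nhds hx] with y hy
    rw [← fderiv_component (g.diffAt hU hy) q, ← fderiv_component (g.diffAt hU hy) p,
      g.curl y hy p q]
  have h3 := heq.fderiv_eq (𝕜 := ℝ)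
  rw [h1, h2] at h3
  exact ContinuousLinearMap.ext_iff.1 h3 a

/-- Differentiated divergence identity: `∑ i, ∂ₐ ∂ᵢ v_i = 0`. -/
lemma Good.divS (hU : IsOpen U) (g : Good U N v) (hx : x ∈ U)
    (a : EuclideanSpace ℝ (Fin n)) :
    ∑ i : Fin n, (fderiv ℝ (fderiv ℝ v) x a (EuclideanSpace.single i 1)) i = 0 := by
  have hG : HasFDerivAt
      (fun y => ∑ i : Fin n, (fderiv ℝ v y (EuclideanSpace.single i 1)) i)
      (∑ i : Fin n, ((EuclideanSpace.proj i).comp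
        (A (EuclideanSpace.single i 1))).comp (fderiv ℝ (fderiv ℝ v) x)) x :=
    HasFDerivAt.fun_sum fun i _ => g.hasFDerivAt_comp2 hU hx i i
  have hG0 : (fun y => ∑ i : Fin n, (fderiv ℝ v y (EuclideanSpace.single i 1)) i)
      =ᶠ[𝓝 x] fun _ => 0 := by
    filter_upwards [hU.mem_nhds hx] with y hy
    have := g.div y hy
    rw [← this]
    exact Finset.sum_congr rfl fun i _ => (fderiv_component (g.diffAt hU hy) i _).symm
  have h1 := hG.fderiv
  rw [hG0.fderiv_eq (𝕜 := ℝ)] at h1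
  have h2 := ContinuousLinearMap.ext_iff.1 h1.symm a
  rw [ContinuousLinearMap.sum_apply] at h2
  have h3 : fderiv ℝ (fun _ : EuclideanSpace ℝ (Fin n) => (0:ℝ)) x a = 0 := by
    rw [fderiv_fun_const]
    rfl
  rw [h3] at h2
  exact h2

/-- The directional derivative field inherits all the hypotheses. -/
lemma Good.deriv (hU : IsOpen U) (g : Good U N v) (j : Fin n) :
    Good U N (fun y => fderiv ℝ v y (EuclideanSpace.single j 1)) := by
  constructor
  · exact (g.smooth.fderiv_of_isOpen hU (by simp)).clm_apply contDiffOn_const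
  · intro x hx i' j'
    rw [(g.hasFDerivAt_comp2 hU hx j j').fderiv, (g.hasFDerivAt_comp2 hU hx j i').fderiv]
    show (fderiv ℝ (fderiv ℝ v) x (EuclideanSpace.single i' 1)
        (EuclideanSpace.single j 1)) j'
      = (fderiv ℝ (fderiv ℝ v) x (EuclideanSpace.single j' 1)
        (EuclideanSpace.single j 1)) i'
    rw [g.swapS hU hx _ j j',
      g.symmS hU hx (EuclideanSpace.single i' 1) (EuclideanSpace.single j' 1),
      g.swapS hU hx _ i' j]
  · intro x hx
    have : ∀ i : Fin n,
        fderiv ℝ (fun y => (fderiv ℝ v y (EuclideanSpace.single j 1)) i) x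
          (EuclideanSpace.single i 1)
        = (fderiv ℝ (fderiv ℝ v) x (EuclideanSpace.single i 1)
            (EuclideanSpace.single j 1)) i := by
      intro i
      rw [(g.hasFDerivAt_comp2 hU hx j i).fderiv]
      rfl
    calc ∑ i : Fin n, fderiv ℝ
          (fun y => (fderiv ℝ v y (EuclideanSpace.single j 1)) i) x
          (EuclideanSpace.single i 1)
        = ∑ i : Fin n, (fderiv ℝ (fderiv ℝ v) x (EuclideanSpace.single j 1)
            (EuclideanSpace.single i 1)) i := by
          refine Finset.sum_congr rfl fun i _ => ?_
          rw [this i, g.symmS hU hx (EuclideanSpace.single i 1) (EuclideanSpace.single j 1)]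
      _ = 0 := g.divS hU hx _
  · intro x hx hx0
    rw [g.fderiv_zero hU hx hx0]
    rfl


lemma aux (hU : IsOpen U) (N : Fin n) :
    ∀ (k : ℕ) (v : EuclideanSpace ℝ (Fin n) → EuclideanSpace ℝ (Fin n)),
      Good U N v → ∀ x ∈ U, x N = 0 → iteratedFDeriv ℝ k v x = 0 := by
  intro k
  induction k with
  | zero =>
    intro v g x hx hx0
    ext m
    rw [iteratedFDeriv_zero_apply, g.zero x hx hx0]
    rfl
  | succ k IH =>
    intro v g x hx hx0
    have hf's : ContDiffOn ℝ (⊤ : ℕ∞) (fderiv ℝ v) U := g.smooth.fderiv_of_isOpen hU (by simp)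
    have key : ∀ j : Fin n,
        (A (EuclideanSpace.single j 1)).compContinuousMultilinearMap
          (iteratedFDeriv ℝ k (fderiv ℝ v) x) = 0 := by
      intro j
      have hcomp := (A (EuclideanSpace.single j 1)).iteratedFDerivWithin_comp_left
        (f := fderiv ℝ v) (hf's x hx) hU.uniqueDiffOn hx (by exact_mod_cast (le_top : (k : ℕ∞) ≤ ⊤) : (k : WithTop ℕ∞) ≤ ((⊤ : ℕ∞) : WithTop ℕ∞))
      rw [iteratedFDerivWithin_of_isOpen k hU hx,
        iteratedFDerivWithin_of_isOpen k hU hx] at hcomp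
      rw [← hcomp]
      exact IH _ (g.deriv hU j) x hx hx0
    have h4 : iteratedFDeriv ℝ k (fderiv ℝ v) x = 0 := by
      refine ContinuousMultilinearMap.ext fun m => ?_
      refine ContinuousLinearMap.ext fun u => ?_
      have hu := euclid_decomp u
      rw [← hu]
      have hz : ∀ j : Fin n, (iteratedFDeriv ℝ k (fderiv ℝ v) x m)
          (EuclideanSpace.single j 1) = 0 :=
        fun j => ContinuousMultilinearMap.ext_iff.1 (key j) m
      simp only [map_sum, map_smul, hz, smul_zero, Finset.sum_const_zero,
        ContinuousLinearMap.zero_apply, ContinuousMultilinearMap.zero_apply]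
    ext m
    rw [iteratedFDeriv_succ_apply_right, h4]
    simp

end CC

/-- **Key step in the proof of Lemma 2 (flat version).**  Let `v` be a smooth vector field
on an open set `U ⊆ ℝⁿ` (`n ≥ 2`) which is curl-free and divergence-free on `U` (so the
1-form `Σ vᵢ dxᵢ` is closed and co-closed), and which vanishes at every point of `U` lying
on the hyperplane `{xₙ = 0}`.  Then `v` vanishes to infinite order along that hyperplane:
all iterated Fréchet derivatives of `v` vanish at every such point. -/
theorem closed_coclosed_vanishes_to_infinite_order
    (n : ℕ) (hn : 2 ≤ n) (U : Set (EuclideanSpace ℝ (Fin n))) (hU : IsOpen U)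
    (v : EuclideanSpace ℝ (Fin n) → EuclideanSpace ℝ (Fin n))
    (hv : ContDiffOn ℝ (⊤ : ℕ∞) v U)
    (hcurl : ∀ x ∈ U, ∀ i j : Fin n,
      fderiv ℝ (fun y => v y j) x (EuclideanSpace.single i 1) =
        fderiv ℝ (fun y => v y i) x (EuclideanSpace.single j 1))
    (hdiv : ∀ x ∈ U, ∑ i : Fin n,
      fderiv ℝ (fun y => v y i) x (EuclideanSpace.single i 1) = 0)
    (hzero : ∀ x ∈ U, x ⟨n - 1, by omega⟩ = 0 → v x = 0) :
    ∀ x ∈ U, x ⟨n - 1, by omega⟩ = 0 → ∀ k : ℕ, iteratedFDeriv ℝ k v x = 0 := by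
  intro x hx hx0 k
  exact CC.aux hU ⟨n - 1, by omega⟩ k v ⟨hv, hcurl, hdiv, hzero⟩ x hx hx0
end
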